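/- Fix r2, r3 > 0. For r1 > 0 and {i,j,k} = {1,2,3}, let θ_i(r1) = arccos[(cosh(r_i + r_j)·cosh(r_i + r_k) − cosh(r_j + r_k)) / (sinh(r_i + r_j)·sinh(r_i + r_k))]. Then the function r1 ↦ θ1(r1)·cosh(r1) + θ2(r1)·cosh(r2) + θ3(r1)·cosh(r3) is strictly decreasing on (0, +∞). -/

import Mathlib

/-!
Put `K = sinh b sinh c` and `M = sinh a sinh (a + b + c)`. Addition formulas turn the law of
cosines into `cos θ_a = (M - K) / (M + K)`, i.e. `tan (θ_a / 2) = √(K / M) = K / √(K M)`, and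
`K M` is the same for all three angles. Differentiating in `r₁`, the terms `θᵢ' cosh rᵢ` add up to
`-2 sinh r₁ tan (θ₁ / 2)`, so the derivative of `θ₁ cosh r₁ + θ₂ cosh r₂ + θ₃ cosh r₃` is
`sinh r₁ (θ₁ - 2 tan (θ₁ / 2))`, which is negative since `arctan t < t` for `t > 0`.
-/

open Real

/-- The inner angle at the center of the circle of radius `ri` in the triangle formed by the
centers of three mutually externally tangent hyperbolic circles of radii `ri`, `rj`, `rk`. -/
noncomputable def innerAngle (ri rj rk : ℝ) : ℝ :=
  Real.arccos ((Real.cosh (ri + rj) * Real.cosh (ri + rk) - Real.cosh (rj + rk)) /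
    (Real.sinh (ri + rj) * Real.sinh (ri + rk)))

theorem Real.cosh_add_mul_cosh_add_sub_cosh_add (a b c : ℝ) :
    cosh (a + b) * cosh (a + c) - cosh (b + c) = sinh a * sinh (a + b + c) - sinh b * sinh c := by
  simp only [cosh_eq, sinh_eq, exp_add, exp_neg]
  field_simp
  ring

theorem Real.sinh_add_mul_sinh_add (a b c : ℝ) :
    sinh (a + b) * sinh (a + c) = sinh a * sinh (a + b + c) + sinh b * sinh c := by
  simp only [sinh_eq, exp_add, exp_neg]
  field_simp
  ring

theorem Real.arccos_one_sub_sq_div_one_add_sq {t : ℝ} (ht : 0 ≤ t) :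
    arccos ((1 - t ^ 2) / (1 + t ^ 2)) = 2 * arctan t := by
  have hcos : cos (2 * arctan t) = (1 - t ^ 2) / (1 + t ^ 2) := by
    rw [cos_two_mul, cos_sq_arctan]
    field_simp
    ring
  have := arctan_nonneg.2 ht
  rw [← hcos, arccos_cos (by linarith) (by linarith [arctan_lt_pi_div_two t, pi_pos])]

theorem Real.arctan_lt_self {t : ℝ} (ht : 0 < t) : arctan t < t := by
  simpa [tan_arctan] using lt_tan (arctan_pos.2 ht) (arctan_lt_pi_div_two t)

theorem HasDerivAt.arccos_sub_div_add {K M : ℝ → ℝ} {K' M' x : ℝ} (hK : HasDerivAt K K' x)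
    (hM : HasDerivAt M M' x) (hK0 : 0 < K x) (hM0 : 0 < M x) :
    HasDerivAt (fun y => arccos ((M y - K y) / (M y + K y)))
      ((K' * M x - K x * M') / (√(K x * M x) * (M x + K x))) x := by
  have hsum : M x + K x ≠ 0 := by positivity
  have hne_neg : (M x - K x) / (M x + K x) ≠ -1 := by
    rw [Ne, div_eq_iff hsum]; linarith
  have hne_one : (M x - K x) / (M x + K x) ≠ 1 := by
    rw [Ne, div_eq_iff hsum]; linarith
  have hsq : 1 - ((M x - K x) / (M x + K x)) ^ 2 = (2 * √(K x * M x) / (M x + K x)) ^ 2 := by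
    rw [div_pow (2 * _), mul_pow, sq_sqrt (by positivity)]
    field_simp
    ring
  refine ((hasDerivAt_arccos hne_neg hne_one).comp x
    ((hM.sub hK).div (hM.add hK) hsum)).congr_deriv ?_
  have : 0 < √(K x * M x) := by positivity
  simp only [Pi.add_apply, Pi.sub_apply]
  rw [hsq, sqrt_sq (by positivity)]
  field_simp
  ring

/-- For the triangle with sides `a + b`, `a + c`, `b + c` and semiperimeter `s = a + b + c`, this
is the hyperbolic counterpart `√(sinh s ∏ sinh (s - side))` of Heron's product. -/
noncomputable def heronSinh (a b c : ℝ) : ℝ := √(sinh a * sinh b * sinh c * sinh (a + b + c))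

theorem heronSinh_swap_left (a b c : ℝ) : heronSinh b a c = heronSinh a b c := by
  simp only [heronSinh]; ring_nf

theorem heronSinh_swap_right (a b c : ℝ) : heronSinh a c b = heronSinh a b c := by
  simp only [heronSinh]; ring_nf

theorem heronSinh_pos {a b c : ℝ} (ha : 0 < a) (hb : 0 < b) (hc : 0 < c) :
    0 < heronSinh a b c := by
  unfold heronSinh; positivity

theorem innerAngle_eq_arccos (a b c : ℝ) :
    innerAngle a b c = arccos ((sinh a * sinh (a + b + c) - sinh b * sinh c) /
      (sinh a * sinh (a + b + c) + sinh b * sinh c)) := by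
  rw [innerAngle, cosh_add_mul_cosh_add_sub_cosh_add, sinh_add_mul_sinh_add]

theorem innerAngle_eq_two_mul_arctan {a b c : ℝ} (ha : 0 < a) (hb : 0 < b) (hc : 0 < c) :
    innerAngle a b c = 2 * arctan (sinh b * sinh c / heronSinh a b c) := by
  have hσ : heronSinh a b c ^ 2 = sinh b * sinh c * (sinh a * sinh (a + b + c)) := by
    rw [heronSinh, sq_sqrt (by positivity)]; ring
  have := heronSinh_pos ha hb hc
  rw [← arccos_one_sub_sq_div_one_add_sq (by positivity), innerAngle_eq_arccos, div_pow, hσ]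
  congr 1
  field_simp

theorem innerAngle_lt_two_mul_div_heronSinh {a b c : ℝ} (ha : 0 < a) (hb : 0 < b) (hc : 0 < c) :
    innerAngle a b c < 2 * (sinh b * sinh c / heronSinh a b c) := by
  rw [innerAngle_eq_two_mul_arctan ha hb hc]
  have := heronSinh_pos ha hb hc
  gcongr
  exact arctan_lt_self (by positivity)

theorem hasDerivAt_innerAngle_left {a b c : ℝ} (ha : 0 < a) (hb : 0 < b) (hc : 0 < c) :
    HasDerivAt (fun x => innerAngle x b c)
      (-(sinh b * sinh c * sinh (2 * a + b + c)) /
        (heronSinh a b c * (sinh (a + b) * sinh (a + c)))) a := by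
  have hM : HasDerivAt (fun x => sinh x * sinh (x + b + c)) (sinh (2 * a + b + c)) a := by
    refine ((hasDerivAt_sinh a).mul
      (((hasDerivAt_id' a).add_const b).add_const c).sinh).congr_deriv ?_
    rw [show 2 * a + b + c = a + (a + b + c) by ring, sinh_add a]
    ring
  simp only [innerAngle_eq_arccos]
  refine ((hasDerivAt_const a (sinh b * sinh c)).arccos_sub_div_add hM (by positivity)
    (by positivity)).congr_deriv ?_
  rw [← sinh_add_mul_sinh_add, heronSinh]
  ring_nf

theorem hasDerivAt_innerAngle_mid {a b c : ℝ} (ha : 0 < a) (hb : 0 < b) (hc : 0 < c) :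
    HasDerivAt (fun x => innerAngle a x c)
      (sinh a * sinh c / (heronSinh a b c * sinh (a + b))) b := by
  have hK : HasDerivAt (fun x => sinh x * sinh c) (cosh b * sinh c) b :=
    (hasDerivAt_sinh b).mul_const _
  have hM : HasDerivAt (fun x => sinh a * sinh (a + x + c)) (sinh a * cosh (a + b + c)) b := by
    simpa using (((hasDerivAt_id b).const_add a).add_const c).sinh.const_mul (sinh a)
  simp only [innerAngle_eq_arccos]
  refine (hK.arccos_sub_div_add hM (by positivity) (by positivity)).congr_deriv ?_
  have hac : sinh (a + c) = sinh (a + b + c) * cosh b - cosh (a + b + c) * sinh b := by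
    rw [← sinh_sub]; ring_nf
  have : 0 < sinh (a + c) := by positivity
  have := heronSinh_pos ha hb hc
  rw [← sinh_add_mul_sinh_add, heronSinh]
  field_simp
  rw [hac]
  ring_nf

noncomputable def arcCurvatureSum (r₁ r₂ r₃ : ℝ) : ℝ :=
  innerAngle r₁ r₂ r₃ * cosh r₁ + innerAngle r₂ r₁ r₃ * cosh r₂ + innerAngle r₃ r₁ r₂ * cosh r₃

theorem hasDerivAt_arcCurvatureSum {x b c : ℝ} (hx : 0 < x) (hb : 0 < b) (hc : 0 < c) :
    HasDerivAt (fun r => arcCurvatureSum r b c)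
      (sinh x * (innerAngle x b c - 2 * (sinh b * sinh c / heronSinh x b c))) x := by
  have h₁ := (hasDerivAt_innerAngle_left hx hb hc).mul (hasDerivAt_cosh x)
  have h₂ := (hasDerivAt_innerAngle_mid hb hx hc).mul_const (cosh b)
  have h₃ := (hasDerivAt_innerAngle_mid hc hx hb).mul_const (cosh c)
  refine ((h₁.add h₂).add h₃).congr_deriv ?_
  have key : cosh b * sinh (x + c) + cosh c * sinh (x + b) - cosh x * sinh (2 * x + b + c) =
      -2 * sinh x * sinh (x + b) * sinh (x + c) := by
    simp only [cosh_eq, sinh_eq, exp_add, exp_neg, two_mul]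
    field_simp
    ring
  rw [heronSinh_swap_left x b, heronSinh_swap_left x c, heronSinh_swap_right x b, add_comm b x,
    add_comm c x]
  have := heronSinh_pos hx hb hc
  have : 0 < sinh (x + b) := by positivity
  have : 0 < sinh (x + c) := by positivity
  field_simp
  linear_combination (sinh b * sinh c) * key

theorem stmt_13 (r2 r3 : ℝ) (h2 : 0 < r2) (h3 : 0 < r3) :
    StrictAntiOn
      (fun r1 : ℝ =>
        innerAngle r1 r2 r3 * Real.cosh r1 + innerAngle r2 r1 r3 * Real.cosh r2 +
          innerAngle r3 r1 r2 * Real.cosh r3)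
      (Set.Ioi 0) := by
  show StrictAntiOn (fun r₁ => arcCurvatureSum r₁ r2 r3) (Set.Ioi 0)
  have hderiv (x : ℝ) (hx : x ∈ Set.Ioi 0) := hasDerivAt_arcCurvatureSum hx h2 h3
  refine strictAntiOn_of_deriv_neg (convex_Ioi 0)
    (fun x hx => (hderiv x hx).continuousAt.continuousWithinAt) fun x hx => ?_
  rw [interior_Ioi] at hx
  rw [(hderiv x hx).deriv]
  exact mul_neg_of_pos_of_neg (sinh_pos_iff.2 hx)
    (sub_neg.2 (innerAngle_lt_two_mul_div_heronSinh hx h2 h3))
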